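/- There exist positive constants C and k0 such that for all integers N and k with k0 ≤ k ≤ N, and all q ∈ [k^{-2}, 1), the sum S = Σ_{i=1}^{k−1} ( (i/k)·(1−i/k) )^{-1} · exp[ k·( (i/k)·log(1/q) + 2·H(i/k) + (k/N)·(1−i/k) ) ] satisfies S ≥ C^{-1}·q^{-1/4}·k^{1/2}·[ (1 + q^{1/2}·exp(k/(2N)))² / q ]^k. -/

import Mathlib

/-!
Write `s = √q · exp (k / 2N)`, so that `log q⁻¹ = k/N - 2 log s` and the exponent of the `i`-th term
is `k (k/N + 2 (H x - x log s))` at `x = i/k`. The function `H x - x log s` is maximal at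
`x = 1 / (1 + s)` with value `log ((1 + s) / s)`, so the maximal exponent is `k log ((1 + s)² / q)`,
and the quadratic lower bound `H x ≥ H y + H' y (x - y) - (x - y)² / (y (1 - y))` keeps the exponent
within a constant of its maximum on a window of `√(k s)` indices left of `k / (1 + s)`. There the
prefactor `(x (1 - x))⁻¹` is `≳ s⁻¹`, so the sum is `≳ √(k s) · s⁻¹ · ((1 + s)² / q) ^ k`, and
`√(k / s) ≳ q^(-1/4) √k` because `s ≤ 2 √q` when `k ≤ N`.
-/

/-- The entropy function `H(x) = -x log x - (1-x) log (1-x)`. -/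
noncomputable def entropyH (x : ℝ) : ℝ := -x * Real.log x - (1 - x) * Real.log (1 - x)

/-- The sum `S` appearing in the factorial moment formula. -/
noncomputable def ledouxSum (q : ℝ) (N k : ℕ) : ℝ :=
  ∑ i ∈ Finset.Ico 1 k,
    (((i : ℝ) / k) * (1 - (i : ℝ) / k))⁻¹ *
      Real.exp ((k : ℝ) * (((i : ℝ) / k) * Real.log q⁻¹ + 2 * entropyH ((i : ℝ) / k) +
        ((k : ℝ) / N) * (1 - (i : ℝ) / k)))

open Real Finset

lemma entropyH_tangent_sub_le {x y : ℝ} (hx0 : 0 < x) (hx1 : x < 1) (hy0 : 0 < y) (hy1 : y < 1) :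
    entropyH y + (x - y) * (log (1 - y) - log y) - (x - y) ^ 2 / (y * (1 - y)) ≤ entropyH x := by
  have h1x : 0 < 1 - x := by linarith
  have h1y : 0 < 1 - y := by linarith
  -- the gap is a sum of two relative entropies, each bounded by `log t ≤ t - 1`
  have hlog_x : x * log (x / y) ≤ x * (x / y - 1) :=
    mul_le_mul_of_nonneg_left (log_le_sub_one_of_pos (by positivity)) hx0.le
  have hlog_1x : (1 - x) * log ((1 - x) / (1 - y)) ≤ (1 - x) * ((1 - x) / (1 - y) - 1) :=
    mul_le_mul_of_nonneg_left (log_le_sub_one_of_pos (by positivity)) h1x.le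
  have hchi : x * (x / y - 1) + (1 - x) * ((1 - x) / (1 - y) - 1) = (x - y) ^ 2 / (y * (1 - y)) := by
    field_simp
    ring
  rw [log_div hx0.ne' hy0.ne'] at hlog_x
  rw [log_div h1x.ne' h1y.ne'] at hlog_1x
  unfold entropyH
  linarith

-- the tangent inequality at `y = 1 / (1 + s)`, where the slope `log (1 - y) - log y` is `log s`
lemma entropyH_sub_mul_log_ge {s x : ℝ} (hs : 0 < s) (hx0 : 0 < x) (hx1 : x < 1) :
    log ((1 + s) / s) - ((1 + s) * x - 1) ^ 2 / s ≤ entropyH x - x * log s := by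
  have h1s : 0 < 1 + s := by linarith
  have hy1 : (1 + s)⁻¹ < 1 := inv_lt_one_of_one_lt₀ (by linarith)
  have h1y : 1 - (1 + s)⁻¹ = s / (1 + s) := by field_simp; ring
  have key := entropyH_tangent_sub_le hx0 hx1 (inv_pos.2 h1s) hy1
  have hsq : (x - (1 + s)⁻¹) ^ 2 / ((1 + s)⁻¹ * (1 - (1 + s)⁻¹)) = ((1 + s) * x - 1) ^ 2 / s := by
    rw [h1y]; field_simp
  rw [hsq] at key
  unfold entropyH at key ⊢
  rw [h1y, log_inv, log_div hs.ne' h1s.ne'] at key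
  rw [log_div h1s.ne' hs.ne']
  have hsum : (1 + s)⁻¹ + s / (1 + s) = 1 := by field_simp
  linear_combination key - (log (1 + s) - log s) * hsum

noncomputable def ledouxTerm (q : ℝ) (N k : ℕ) (x : ℝ) : ℝ :=
  (x * (1 - x))⁻¹ * exp (k * (x * log q⁻¹ + 2 * entropyH x + (k / N) * (1 - x)))

lemma ledouxSum_eq_sum_ledouxTerm (q : ℝ) (N k : ℕ) :
    ledouxSum q N k = ∑ i ∈ Ico 1 k, ledouxTerm q N k (i / k) := rfl

lemma ledouxTerm_pos (q : ℝ) (N k : ℕ) {x : ℝ} (hx0 : 0 < x) (hx1 : x < 1) :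
    0 < ledouxTerm q N k x := by
  have : 0 < x * (1 - x) := mul_pos hx0 (by linarith)
  unfold ledouxTerm
  positivity

lemma ledouxTerm_ge {q s x : ℝ} {N k : ℕ} (hq : 0 < q) (hlog : 2 * log s = log q + k / N)
    (hks : 1 ≤ k * s) (hx0 : 0 < x) (hx1 : x < 1)
    (hwin : ((1 + s) * x - 1) ^ 2 ≤ 9 * s / k) :
    (4 * s)⁻¹ * exp (-18) * ((1 + s) ^ 2 / q) ^ k ≤ ledouxTerm q N k x := by
  have hs : 0 < s := pos_of_mul_pos_right (by linarith) (Nat.cast_nonneg k)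
  have hk : (0 : ℝ) < k := pos_of_mul_pos_left (by linarith) hs.le
  have hdev : |(1 + s) * x - 1| ≤ 3 * s := by
    refine abs_le_of_sq_le_sq ?_ (by positivity)
    calc ((1 + s) * x - 1) ^ 2 ≤ 9 * s / k := hwin
      _ ≤ (3 * s) ^ 2 := by rw [div_le_iff₀ hk]; nlinarith
  have hprefactor : (4 * s)⁻¹ ≤ (x * (1 - x))⁻¹ := by
    refine inv_anti₀ (mul_pos hx0 (by linarith)) ?_
    nlinarith [(abs_le.1 hdev).1]
  have hexponent : k * log ((1 + s) ^ 2 / q) - 18 ≤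
      k * (x * log q⁻¹ + 2 * entropyH x + (k / N) * (1 - x)) := by
    have hH := entropyH_sub_mul_log_ge hs hx0 hx1
    have herr : k * (((1 + s) * x - 1) ^ 2 / s) ≤ 9 := by
      rw [← mul_div_assoc, div_le_iff₀ hs]
      rw [le_div_iff₀ hk] at hwin
      nlinarith
    rw [log_div (by positivity) hs.ne'] at hH
    have hkH := mul_le_mul_of_nonneg_left hH hk.le
    rw [log_div (by positivity) hq.ne', log_pow, log_inv, show log q = 2 * log s - k / N by linarith]
    push_cast
    linarith
  calc (4 * s)⁻¹ * exp (-18) * ((1 + s) ^ 2 / q) ^ k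
      = (4 * s)⁻¹ * exp (k * log ((1 + s) ^ 2 / q) - 18) := by
        rw [sub_eq_add_neg, exp_add, exp_nat_mul, exp_log (by positivity)]; ring
    _ ≤ ledouxTerm q N k x :=
        mul_le_mul hprefactor (exp_le_exp.2 hexponent) (exp_pos _).le (by positivity)

lemma exists_finset_nat_card_ge {a L : ℝ} (hL : 1 ≤ L) (hLa : L ≤ a) :
    ∃ W : Finset ℕ, L / 2 ≤ #W ∧ ∀ i ∈ W, a - L < i ∧ (i : ℝ) ≤ a := by
  have hfloor : ⌊L⌋₊ ≤ ⌊a⌋₊ := Nat.floor_le_floor hLa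
  refine ⟨Ioc (⌊a⌋₊ - ⌊L⌋₊) ⌊a⌋₊, ?_, fun i hi => ?_⟩
  · rw [Nat.card_Ioc, Nat.sub_sub_self hfloor]
    have := Nat.lt_floor_add_one L
    have : (1 : ℝ) ≤ ⌊L⌋₊ := by exact_mod_cast Nat.one_le_floor_iff L |>.2 hL
    linarith
  · obtain ⟨hlo, hhi⟩ := mem_Ioc.1 hi
    have hlo' : ((⌊a⌋₊ - ⌊L⌋₊ + 1 : ℕ) : ℝ) ≤ i := by exact_mod_cast hlo
    push_cast [hfloor] at hlo'
    have := Nat.lt_floor_add_one a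
    have := Nat.floor_le (show 0 ≤ L by linarith)
    exact ⟨by linarith, (Nat.cast_le.2 hhi).trans (Nat.floor_le (by linarith))⟩

lemma ledouxSum_ge {q s : ℝ} {N k : ℕ} (hk : 18 ≤ k) (hq : 0 < q)
    (hlog : 2 * log s = log q + k / N) (hks : 1 ≤ k * s) (hs2 : s ≤ 2) :
    exp (-18) / 8 * √(k / s) * ((1 + s) ^ 2 / q) ^ k ≤ ledouxSum q N k := by
  have hkR : (18 : ℝ) ≤ k := by exact_mod_cast hk
  have hs : 0 < s := pos_of_mul_pos_right (by linarith) (Nat.cast_nonneg k)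
  -- a window of `√(k s)` indices ending at `k / (1 + s)`, the maximiser of the exponent
  have hwin_le : √(k * s) ≤ k / (1 + s) := by
    refine sqrt_le_iff.2 ⟨by positivity, ?_⟩
    rw [div_pow, le_div_iff₀ (by positivity)]
    have : s * (1 + s) ^ 2 ≤ k := by nlinarith
    nlinarith
  obtain ⟨W, hcard, hW⟩ :=
    exists_finset_nat_card_ge (one_le_sqrt.2 hks) hwin_le
  have hterm : ∀ i ∈ W, 0 < i ∧ i < k ∧
      (4 * s)⁻¹ * exp (-18) * ((1 + s) ^ 2 / q) ^ k ≤ ledouxTerm q N k (i / k) := by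
    intro i hi
    obtain ⟨hlo, hhi⟩ := hW i hi
    have hi0 : (0 : ℝ) < i := by linarith
    have hik : (i : ℝ) < k := hhi.trans_lt (div_lt_self (by positivity) (by linarith))
    refine ⟨by exact_mod_cast hi0, by exact_mod_cast hik, ledouxTerm_ge hq hlog hks
      (by positivity) ((div_lt_one (by positivity)).2 hik) ?_⟩
    have hdev : ((1 + s) * i - k) ^ 2 ≤ (1 + s) ^ 2 * (k * s) := by
      have h1 : (1 + s) * i - k ≤ 0 := by
        rw [le_div_iff₀ (by positivity)] at hhi
        linarith
      have h2 : -((1 + s) * √(k * s)) < (1 + s) * i - k := by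
        have := mul_lt_mul_of_pos_left hlo (by positivity : 0 < 1 + s)
        rw [mul_sub, mul_div_cancel₀ _ (by positivity)] at this
        linarith
      rw [← sq_sqrt (by positivity : 0 ≤ k * s), ← mul_pow]
      nlinarith
    rw [show (1 + s) * (i / k) - 1 = ((1 + s) * i - k) / k by field_simp, div_pow,
      div_le_div_iff₀ (by positivity) (by positivity)]
    have h9 : (1 + s) ^ 2 ≤ 9 := by nlinarith
    calc ((1 + s) * i - k) ^ 2 * k ≤ (1 + s) ^ 2 * (k * s) * k := by gcongr
      _ ≤ 9 * (k * s) * k := by gcongr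
      _ = 9 * s * k ^ 2 := by ring
  calc exp (-18) / 8 * √(k / s) * ((1 + s) ^ 2 / q) ^ k
      = √(k * s) / 2 * ((4 * s)⁻¹ * exp (-18) * ((1 + s) ^ 2 / q) ^ k) := by
        rw [sqrt_div' _ hs.le, sqrt_mul (by positivity)]
        field_simp
        rw [sq_sqrt hs.le]
        ring
    _ ≤ #W * ((4 * s)⁻¹ * exp (-18) * ((1 + s) ^ 2 / q) ^ k) :=
        mul_le_mul_of_nonneg_right hcard (by positivity)
    _ ≤ ∑ i ∈ W, ledouxTerm q N k (i / k) := by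
        rw [← nsmul_eq_mul]
        exact card_nsmul_le_sum _ _ _ fun i hi => (hterm i hi).2.2
    _ ≤ ledouxSum q N k := by
        rw [ledouxSum_eq_sum_ledouxTerm]
        refine sum_le_sum_of_subset_of_nonneg (fun i hi => ?_) fun i hi _ => ?_
        · obtain ⟨hi0, hik, -⟩ := hterm i hi
          exact mem_Ico.2 ⟨hi0, hik⟩
        · obtain ⟨hi1, hik⟩ := mem_Ico.1 hi
          have hk0 : (0 : ℝ) < k := by linarith
          refine (ledouxTerm_pos q N k (by positivity) ?_).le
          exact (div_lt_one hk0).2 (by exact_mod_cast hik)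

lemma exp_half_le_two : exp (1 / 2) ≤ 2 := by
  rw [exp_half, sqrt_le_iff]
  exact ⟨by norm_num, by linarith [exp_one_lt_d9]⟩

lemma sq_rpow_quarter {q : ℝ} (hq : 0 ≤ q) : (q ^ ((1 : ℝ) / 4)) ^ 2 = √q := by
  rw [← rpow_natCast, ← rpow_mul hq, sqrt_eq_rpow]
  norm_num

lemma ledouxSum_ge_of_le_two_mul_sqrt {q s : ℝ} {N k : ℕ} (hk : 18 ≤ k) (hq : 0 < q)
    (hq1 : q ≤ 1) (hlog : 2 * log s = log q + k / N) (hks : 1 ≤ k * s) (hs : s ≤ 2 * √q) :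
    (16 * exp 18)⁻¹ * q ^ (-(1:ℝ)/4) * √k * ((1 + s) ^ 2 / q) ^ k ≤ ledouxSum q N k := by
  have hs0 : 0 < s := pos_of_mul_pos_right (by linarith) (Nat.cast_nonneg k)
  have hs2 : s ≤ 2 := hs.trans (by nlinarith [sqrt_le_one.2 hq1])
  have hsqrt_s : √s ≤ 2 * q ^ ((1 : ℝ) / 4) := by
    rw [sqrt_le_iff, mul_pow, sq_rpow_quarter hq.le]
    exact ⟨by positivity, by nlinarith [sqrt_nonneg q]⟩
  calc (16 * exp 18)⁻¹ * q ^ (-(1:ℝ)/4) * √k * ((1 + s) ^ 2 / q) ^ k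
      = (exp 18)⁻¹ / 8 * √k * (2 * q ^ ((1 : ℝ) / 4))⁻¹ * ((1 + s) ^ 2 / q) ^ k := by
        rw [neg_div, rpow_neg hq.le]
        ring
    _ ≤ (exp 18)⁻¹ / 8 * √k * (√s)⁻¹ * ((1 + s) ^ 2 / q) ^ k := by gcongr
    _ = exp (-18) / 8 * √(k / s) * ((1 + s) ^ 2 / q) ^ k := by
        rw [exp_neg, sqrt_div' _ hs0.le]
        ring
    _ ≤ ledouxSum q N k := ledouxSum_ge hk hq hlog hks hs2

theorem ledoux_sum_lower_bound :
    ∃ C : ℝ, 0 < C ∧ ∃ k0 : ℕ, 0 < k0 ∧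
      ∀ N k : ℕ, k0 ≤ k → k ≤ N →
        ∀ q : ℝ, q ∈ Set.Ico (((k : ℝ) ^ 2)⁻¹) 1 →
          C⁻¹ * q ^ (-(1:ℝ)/4) * (k : ℝ) ^ ((1:ℝ)/2) *
              ((1 + q ^ ((1:ℝ)/2) * Real.exp ((k : ℝ) / (2 * N))) ^ 2 / q) ^ k ≤
            ledouxSum q N k := by
  refine ⟨16 * exp 18, by positivity, 18, by norm_num, fun N k hk hkN q ⟨hq_lb, hq1⟩ => ?_⟩
  have hkR : (18 : ℝ) ≤ k := by exact_mod_cast hk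
  have hkN' : (k : ℝ) ≤ N := by exact_mod_cast hkN
  have hq : 0 < q := lt_of_lt_of_le (by positivity) hq_lb
  simp only [← sqrt_eq_rpow]
  have hexp_le : exp (k / (2 * N)) ≤ 2 := by
    refine (exp_le_exp.2 ?_).trans exp_half_le_two
    rw [div_le_div_iff₀ (by linarith) (by norm_num)]
    linarith
  have hsqrt_q : (k : ℝ)⁻¹ ≤ √q := by
    simpa [sqrt_inv, sqrt_sq (Nat.cast_nonneg k)] using sqrt_le_sqrt hq_lb
  have hlog : 2 * log (√q * exp (k / (2 * N))) = log q + k / N := by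
    rw [log_mul (by positivity) (exp_pos _).ne', log_exp, log_sqrt hq.le]
    field_simp
  have hks : 1 ≤ k * (√q * exp (k / (2 * N))) :=
    calc (1 : ℝ) = k * (k : ℝ)⁻¹ := (mul_inv_cancel₀ (by positivity)).symm
      _ ≤ k * √q := by gcongr
      _ ≤ k * (√q * exp (k / (2 * N))) := by
        gcongr
        exact le_mul_of_one_le_right (sqrt_nonneg q) (one_le_exp (by positivity))
  exact ledouxSum_ge_of_le_two_mul_sqrt hk hq hq1.le hlog hks (by nlinarith [sqrt_nonneg q])
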